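/- The groups BS(2,4) and G = ⟨c∘, y, t ∣ [y, c∘²] = 1, t⁻¹c∘²t = c∘⁸⟩ are not isomorphic, since their abelianizations ℤ × ℤ/2ℤ and ℤ² × ℤ/6ℤ are not isomorphic. -/

import Mathlib

open FreeGroup

/-- The Baumslag–Solitar group `BS(n,m) = ⟨c, d ∣ d⁻¹cⁿd = cᵐ⟩` (generator 0 is `c`,
generator 1 is `d`). -/
abbrev BS (n m : ℕ) : Type :=
  PresentedGroup ({(of 1)⁻¹ * (of 0) ^ n * of 1 * ((of 0) ^ m)⁻¹} : Set (FreeGroup (Fin 2)))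

/-- The group `G = ⟨c∘, y, t ∣ [y, c∘²] = 1, t⁻¹c∘²t = c∘⁸⟩` (generators: 0 = c∘, 1 = y,
2 = t; the commutator `[a,b]` is `a⁻¹b⁻¹ab`). -/
abbrev Gcyt : Type :=
  PresentedGroup ({(of 1)⁻¹ * ((of 0) ^ 2)⁻¹ * of 1 * (of 0) ^ 2,
                   (of 2)⁻¹ * (of 0) ^ 2 * of 2 * ((of 0) ^ 8)⁻¹} : Set (FreeGroup (Fin 3)))

/-- Homomorphisms out of a presented group correspond to functions on generators
satisfying the relations. -/
def presentedHomEquiv {α : Type*} {M : Type*} [Group M] (rels : Set (FreeGroup α)) :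
    (PresentedGroup rels →* M) ≃ {f : α → M // ∀ r ∈ rels, FreeGroup.lift f r = 1} where
  toFun g := ⟨fun x => g (PresentedGroup.of x), fun r hr => by
    have h1 : (g.comp (PresentedGroup.mk rels)) r
        = FreeGroup.lift (fun x => g (PresentedGroup.of x)) r :=
      FreeGroup.lift_unique (g.comp (PresentedGroup.mk rels)) (fun x => rfl)
    have h2 : PresentedGroup.mk rels r = 1 :=
      (QuotientGroup.eq_one_iff r).mpr (Subgroup.subset_normalClosure hr)
    rw [← h1]
    simp only [MonoidHom.comp_apply, h2, _root_.map_one]⟩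
  invFun f := PresentedGroup.toGroup f.2
  left_inv g := PresentedGroup.ext fun x => by simp [PresentedGroup.toGroup.of]
  right_inv f := Subtype.ext (funext fun x => PresentedGroup.toGroup.of f.2)

/-- `BS(2,4)` and `G = ⟨c∘, y, t ∣ [y, c∘²] = 1, t⁻¹c∘²t = c∘⁸⟩` are not isomorphic
(their abelianizations `ℤ × ℤ/2ℤ` and `ℤ² × ℤ/6ℤ` are not isomorphic). -/
theorem stmt18 : ¬ Nonempty (BS 2 4 ≃* Gcyt) := by
  rintro ⟨e⟩
  set M := Multiplicative (ZMod 3) with hM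
  -- transport homomorphism spaces along the isomorphism
  have E0 : (Gcyt →* M) ≃ (BS 2 4 →* M) :=
    { toFun := fun g => g.comp e.toMonoidHom
      invFun := fun g => g.comp e.symm.toMonoidHom
      left_inv := fun g => by ext x; simp
      right_inv := fun g => by ext x; simp }
  have E1 := (presentedHomEquiv (M := M)
    ({(of 1)⁻¹ * (of 0) ^ 2 * of 1 * ((of 0) ^ 4)⁻¹} : Set (FreeGroup (Fin 2)))).symm.trans
    ((E0.symm.trans (presentedHomEquiv (M := M) _)))
  -- simplify both subtypes
  have hBS : ∀ f : Fin 2 → M,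
      (∀ r ∈ ({(of 1)⁻¹ * (of 0) ^ 2 * of 1 * ((of 0) ^ 4)⁻¹} : Set (FreeGroup (Fin 2))),
        FreeGroup.lift f r = 1) ↔ f 0 = 1 := by
    intro f
    simp only [Set.mem_singleton_iff, forall_eq, _root_.map_mul, _root_.map_inv, _root_.map_pow, FreeGroup.lift_apply_of]
    revert f
    have : ∀ a b : M, (b⁻¹ * a ^ 2 * b * (a ^ 4)⁻¹ = 1 ↔ a = 1) := by decide
    intro f; exact this (f 0) (f 1)
  have hG : ∀ f : Fin 3 → M,
      (∀ r ∈ ({(of 1)⁻¹ * ((of 0) ^ 2)⁻¹ * of 1 * (of 0) ^ 2,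
               (of 2)⁻¹ * (of 0) ^ 2 * of 2 * ((of 0) ^ 8)⁻¹} : Set (FreeGroup (Fin 3))),
        FreeGroup.lift f r = 1) ↔ True := by
    intro f
    simp only [Set.mem_insert_iff, Set.mem_singleton_iff, forall_eq_or_imp, forall_eq,
      iff_true]
    constructor
    · simp only [_root_.map_mul, _root_.map_inv, _root_.map_pow, FreeGroup.lift_apply_of]
      exact (by decide : ∀ a b : M, b⁻¹ * (a ^ 2)⁻¹ * b * a ^ 2 = 1) (f 0) (f 1)
    · simp only [_root_.map_mul, _root_.map_inv, _root_.map_pow, FreeGroup.lift_apply_of]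
      exact (by decide : ∀ a t : M, t⁻¹ * a ^ 2 * t * (a ^ 8)⁻¹ = 1) (f 0) (f 2)
  have E2 : {f : Fin 2 → M // f 0 = 1} ≃ {f : Fin 3 → M // True} :=
    (Equiv.subtypeEquivRight fun f => (hBS f).symm).trans
      (E1.trans (Equiv.subtypeEquivRight hG))
  have := Fintype.card_congr E2
  revert this
  decide
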